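/- Let φ₁,…,φₙ be positive definite unital functionals on ℝ⟨x₁,…,xₙ⟩ (i.e., φᵢ(P*P) ≥ 0 for all P). Define ψ on ℝ⟨x₁,…,xₙ⟩ by ψ(1) = ψ(xᵢ) = 0, ψ(xᵢxⱼ) = δᵢⱼ, and ψ(xᵢ P(x) xⱼ) = δᵢⱼ φᵢ(P(x)) for any polynomial P (extended linearly). Then ψ is conditionally positive definite: ψ(Q*Q) ≥ 0 for every polynomial Q with no constant term whose terms all have degree ≥ 1, where in particular ψ(A*A) = Σᵢ φᵢ(Pᵢ* Pᵢ) ≥ 0 for A = Σᵢ Pᵢ(x) xᵢ. -/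

import Mathlib

/-- The monomial `x_{u(1)} ⋯ x_{u(k)}` in the free algebra `ℝ⟨x₁,…,xₙ⟩`. -/
noncomputable def mono {n : ℕ} (u : List (Fin n)) : FreeAlgebra ℝ (Fin n) :=
  (u.map (FreeAlgebra.ι ℝ)).prod

/-- The span of monomials of length (degree) `< k`: "lower-order terms". -/
noncomputable def lowerOrder (n k : ℕ) : Submodule ℝ (FreeAlgebra ℝ (Fin n)) :=
  Submodule.span ℝ {m | ∃ v : List (Fin n), v.length < k ∧ m = mono v}

/-- The monomial-reversing involution `*` on `ℝ⟨x₁,…,xₙ⟩`. -/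
noncomputable def ncStar {n : ℕ} (P : FreeAlgebra ℝ (Fin n)) : FreeAlgebra ℝ (Fin n) :=
  MulOpposite.unop
    (FreeAlgebra.lift ℝ (fun i => MulOpposite.op (FreeAlgebra.ι ℝ i)) P)

/-- A monic polynomial family: `P_∅ = 1` and `P_u = x_u + lower-order terms`. -/
def IsMonicFamily {n : ℕ} (P : List (Fin n) → FreeAlgebra ℝ (Fin n)) : Prop :=
  P [] = 1 ∧ ∀ u : List (Fin n), P u - mono u ∈ lowerOrder n u.length

/-!
Every polynomial `Q` without constant term can be written as `Q = ∑ᵢ Pᵢ xᵢ`, by splitting off the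
last letter of each monomial. Then `Q* Q = ∑ᵢⱼ xᵢ (Pᵢ* Pⱼ) xⱼ`, and the rule
`ψ(xᵢ P xⱼ) = δᵢⱼ φᵢ(P)` collapses `ψ(Q* Q)` to `∑ᵢ φᵢ(Pᵢ* Pᵢ)`, a sum of nonnegative terms.
-/

section

open FreeAlgebra

variable {n : ℕ}

lemma ncStar_mul (a b : FreeAlgebra ℝ (Fin n)) : ncStar (a * b) = ncStar b * ncStar a := by
  simp [ncStar]

lemma ncStar_ι (i : Fin n) : ncStar (ι ℝ i) = ι ℝ i := by
  simp [ncStar]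

lemma ncStar_sum {α : Type*} (s : Finset α) (f : α → FreeAlgebra ℝ (Fin n)) :
    ncStar (∑ a ∈ s, f a) = ∑ a ∈ s, ncStar (f a) := by
  simp [ncStar]

lemma mono_append_singleton (v : List (Fin n)) (i : Fin n) :
    mono (v ++ [i]) = mono v * ι ℝ i := by
  simp [mono]

variable (n) in
noncomputable def sumMulι : (Fin n → FreeAlgebra ℝ (Fin n)) →ₗ[ℝ] FreeAlgebra ℝ (Fin n) :=
  LinearMap.lsum ℝ _ ℝ fun i => LinearMap.mulRight ℝ (ι ℝ i)

lemma sumMulι_apply (P : Fin n → FreeAlgebra ℝ (Fin n)) :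
    sumMulι n P = ∑ i, P i * ι ℝ i := by
  simp [sumMulι]

lemma span_mono_ne_nil_le_range_sumMulι :
    Submodule.span ℝ {m : FreeAlgebra ℝ (Fin n) | ∃ v : List (Fin n), v ≠ [] ∧ m = mono v}
      ≤ LinearMap.range (sumMulι n) := by
  rw [Submodule.span_le]
  rintro _ ⟨v, hv, rfl⟩
  obtain ⟨w, i, rfl⟩ := v.eq_nil_or_concat'.resolve_left hv
  exact ⟨Pi.single i (mono w), by
    rw [sumMulι, LinearMap.lsum_piSingle, LinearMap.mulRight_apply, mono_append_singleton]⟩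

lemma apply_ncStar_sumMulι_mul_self (φ : Fin n → (FreeAlgebra ℝ (Fin n) →ₗ[ℝ] ℝ))
    (ψ : FreeAlgebra ℝ (Fin n) →ₗ[ℝ] ℝ)
    (hψmid : ∀ (i j : Fin n) (Q : FreeAlgebra ℝ (Fin n)),
      ψ (ι ℝ i * Q * ι ℝ j) = if i = j then φ i Q else 0)
    (P : Fin n → FreeAlgebra ℝ (Fin n)) :
    ψ (ncStar (sumMulι n P) * sumMulι n P) = ∑ i, φ i (ncStar (P i) * P i) := by
  have hterm : ∀ i j, ψ (ncStar (P i * ι ℝ i) * (P j * ι ℝ j))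
      = if i = j then φ i (ncStar (P i) * P j) else 0 := fun i j => by
    rw [ncStar_mul, ncStar_ι, ← hψmid]
    noncomm_ring
  simp_rw [sumMulι_apply, ncStar_sum, Finset.sum_mul, Finset.mul_sum, map_sum, hterm,
    Finset.sum_ite_eq, Finset.mem_univ, if_true]

end

theorem exp_of_functionals_conditionally_positive_general (n : ℕ)
    (φ : Fin n → (FreeAlgebra ℝ (Fin n) →ₗ[ℝ] ℝ))
    (hφpos : ∀ (i : Fin n) (A : FreeAlgebra ℝ (Fin n)), 0 ≤ φ i (ncStar A * A))
    (ψ : FreeAlgebra ℝ (Fin n) →ₗ[ℝ] ℝ)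
    (hψmid : ∀ (i j : Fin n) (Q : FreeAlgebra ℝ (Fin n)),
      ψ (FreeAlgebra.ι ℝ i * Q * FreeAlgebra.ι ℝ j) = if i = j then φ i Q else 0) :
    (∀ Q ∈ Submodule.span ℝ {m : FreeAlgebra ℝ (Fin n) |
        ∃ v : List (Fin n), v ≠ [] ∧ m = mono v},
      0 ≤ ψ (ncStar Q * Q))
    ∧ (∀ P : Fin n → FreeAlgebra ℝ (Fin n),
        ψ (ncStar (∑ i, P i * FreeAlgebra.ι ℝ i) * (∑ i, P i * FreeAlgebra.ι ℝ i))
          = ∑ i, φ i (ncStar (P i) * P i)) := by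
  have hsq := apply_ncStar_sumMulι_mul_self φ ψ hψmid
  refine ⟨fun Q hQ => ?_, fun P => by simpa only [sumMulι_apply] using hsq P⟩
  obtain ⟨P, rfl⟩ := span_mono_ne_nil_le_range_sumMulι hQ
  rw [hsq]
  exact Finset.sum_nonneg fun i _ => hφpos i (P i)

/-- if `φ₁,…,φₙ` are positive definite unital functionals and `ψ` satisfies
`ψ(1) = ψ(xᵢ) = 0`, `ψ(xᵢxⱼ) = δᵢⱼ`, `ψ(xᵢ P xⱼ) = δᵢⱼ φᵢ(P)`, then `ψ` is conditionally
positive definite: `ψ(Q*Q) ≥ 0` for every `Q` in the span of monomials of degree `≥ 1`;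
in particular `ψ(A*A) = Σᵢ φᵢ(Pᵢ* Pᵢ) ≥ 0` for `A = Σᵢ Pᵢ(x)xᵢ`. -/
theorem exp_of_functionals_conditionally_positive (n : ℕ)
    (φ : Fin n → (FreeAlgebra ℝ (Fin n) →ₗ[ℝ] ℝ))
    (hφ1 : ∀ i : Fin n, φ i 1 = 1)
    (hφpos : ∀ (i : Fin n) (A : FreeAlgebra ℝ (Fin n)), 0 ≤ φ i (ncStar A * A))
    (ψ : FreeAlgebra ℝ (Fin n) →ₗ[ℝ] ℝ)
    (hψ1 : ψ 1 = 0)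
    (hψx : ∀ i : Fin n, ψ (FreeAlgebra.ι ℝ i) = 0)
    (hψ2 : ∀ i j : Fin n,
      ψ (FreeAlgebra.ι ℝ i * FreeAlgebra.ι ℝ j) = if i = j then 1 else 0)
    (hψmid : ∀ (i j : Fin n) (Q : FreeAlgebra ℝ (Fin n)),
      ψ (FreeAlgebra.ι ℝ i * Q * FreeAlgebra.ι ℝ j) = if i = j then φ i Q else 0) :
    (∀ Q ∈ Submodule.span ℝ {m : FreeAlgebra ℝ (Fin n) |
        ∃ v : List (Fin n), v ≠ [] ∧ m = mono v},
      0 ≤ ψ (ncStar Q * Q))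
    ∧ (∀ P : Fin n → FreeAlgebra ℝ (Fin n),
        ψ (ncStar (∑ i, P i * FreeAlgebra.ι ℝ i) * (∑ i, P i * FreeAlgebra.ι ℝ i))
          = ∑ i, φ i (ncStar (P i) * P i)) :=
  exp_of_functionals_conditionally_positive_general n φ hφpos ψ hψmid
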